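/- arXiv:1507.03289 — 3 statements merged into one kernel-verified Lean document; each statement's English description precedes it below -/
import Mathlib

section
/- There exists a solvable MPP instance (G, R, x_I, x_G) such that no solution simultaneously attains the minimum total arrival time and the minimum makespan; i.e., every solution whose makespan equals the minimum makespan over all solutions has total arrival time strictly greater than the minimum total arrival time over all solutions. -/
/-!
Formalization of multi-robot path planning on graphs (MPP).

An MPP instance consists of a connected simple graph `G` on a vertex type `V`,
a finite set of robots (an index type `R`), and injective start/goal
configurations `xI xG : R → V`.  A scheduled path is a map `ℕ → V`.
-/

namespace MPPFormal

variable {V R : Type}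

/-- The arrival time of a path `p` with goal `g`: the smallest time `t`
with `p t = g`. -/
noncomputable def arrivalTime (g : V) (p : ℕ → V) : ℕ := sInf {t | p t = g}

/-- A feasible scheduled path from `s` to `g` in the graph `G`:
it starts at `s`, reaches `g` at some time, stays at `g` forever after the
first time it reaches `g`, and at every time step it either traverses an
edge of `G` or stays put. -/
def FeasiblePath (G : SimpleGraph V) (s g : V) (p : ℕ → V) : Prop :=
  p 0 = s ∧ (∃ t, p t = g) ∧ (∀ t, arrivalTime g p ≤ t → p t = g) ∧
    ∀ t, G.Adj (p t) (p (t + 1)) ∨ p t = p (t + 1)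

/-- Two scheduled paths collide if they meet at the same vertex at the same
time, or if they swap along an edge head-on. -/
def Collide (p q : ℕ → V) : Prop :=
  (∃ t, p t = q t) ∨ ∃ t, p t = q (t + 1) ∧ p (t + 1) = q t ∧ p t ≠ p (t + 1)

/-- The length of a scheduled path: the number of time steps at which it
actually moves. -/
noncomputable def pathLen (p : ℕ → V) : ℕ := Set.ncard {t | p t ≠ p (t + 1)}

/-- A solution to the MPP instance `(G, R, xI, xG)`: a family of pairwise
non-colliding feasible paths, one per robot. -/
def IsSolution (G : SimpleGraph V) (xI xG : R → V) (p : R → ℕ → V) : Prop :=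
  (∀ i, FeasiblePath G (xI i) (xG i) (p i)) ∧
    Pairwise fun i j => ¬ Collide (p i) (p j)

/-- `(G, xI, xG)` together with the robot index type `R` forms an MPP
instance: the graph is connected and the start and goal configurations are
injective. -/
def IsMPPInstance (G : SimpleGraph V) (xI xG : R → V) : Prop :=
  G.Connected ∧ Function.Injective xI ∧ Function.Injective xG

variable [Fintype R]

/-- Total arrival time of a solution. -/
noncomputable def totalTime (xG : R → V) (p : R → ℕ → V) : ℕ :=
  ∑ i, arrivalTime (xG i) (p i)

/-- Makespan (last arrival time) of a solution. -/
noncomputable def makespan (xG : R → V) (p : R → ℕ → V) : ℕ :=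
  Finset.univ.sup fun i => arrivalTime (xG i) (p i)

/-- Total distance traveled in a solution. -/
noncomputable def totalDist (p : R → ℕ → V) : ℕ := ∑ i, pathLen (p i)

/-- Maximum single-robot distance of a solution. -/
noncomputable def maxDist (p : R → ℕ → V) : ℕ :=
  Finset.univ.sup fun i => pathLen (p i)

/-- Minimum total arrival time over all solutions. -/
noncomputable def minTotalTime (G : SimpleGraph V) (xI xG : R → V) : ℕ :=
  sInf {c | ∃ p, IsSolution G xI xG p ∧ totalTime xG p = c}

/-- Minimum makespan over all solutions. -/
noncomputable def minMakespan (G : SimpleGraph V) (xI xG : R → V) : ℕ :=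
  sInf {c | ∃ p, IsSolution G xI xG p ∧ makespan xG p = c}

/-- Minimum total distance over all solutions. -/
noncomputable def minTotalDist (G : SimpleGraph V) (xI xG : R → V) : ℕ :=
  sInf {c | ∃ p, IsSolution G xI xG p ∧ totalDist p = c}

/-- Minimum maximum distance over all solutions. -/
noncomputable def minMaxDist (G : SimpleGraph V) (xI xG : R → V) : ℕ :=
  sInf {c | ∃ p, IsSolution G xI xG p ∧ maxDist p = c}

end MPPFormal

/-!
Take the graph

        0
        |
1 — 2 — 3 — 4 — 5
    |       |
    6 ————— 7

with robot 0 going from 0 to 3 and robot 1 from 1 to 5. Letting robot 0 step onto 3 at once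
and sending robot 1 around the detour 2–6–7–4 gives total arrival time 1 + 5 = 6. Makespan 4,
however, forces robot 1 along its unique shortest path 1–2–3–4–5, so it occupies 3 at time 2;
robot 0 then arrives no earlier than time 3 and the total arrival time is at least 3 + 4 = 7.
-/

namespace MPPFormal

section General

variable {V : Type}

theorem arrivalTime_le {g : V} {p : ℕ → V} {t : ℕ} (h : p t = g) : arrivalTime g p ≤ t :=
  Nat.sInf_le h

theorem arrivalTime_eq {g : V} {p : ℕ → V} {t : ℕ} (h : p t = g) (hlt : ∀ s < t, p s ≠ g) :
    arrivalTime g p = t := by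
  refine (arrivalTime_le h).antisymm (not_lt.1 fun hlt' => hlt _ hlt' ?_)
  exact Nat.sInf_mem (s := {t | p t = g}) ⟨t, h⟩

theorem le_add_of_forall_adj_le {G : SimpleGraph V} {φ : V → ℕ}
    (hφ : ∀ x y, G.Adj x y → φ x ≤ φ y + 1) {p : ℕ → V}
    (hp : ∀ t, G.Adj (p t) (p (t + 1)) ∨ p t = p (t + 1)) (s t : ℕ) :
    φ (p s) ≤ φ (p (s + t)) + t := by
  induction t with
  | zero => simp
  | succ t ih =>
    rw [← add_assoc, ← add_assoc]
    rcases hp (s + t) with h | h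
    · have := hφ _ _ h
      omega
    · rw [← h]
      omega

theorem FeasiblePath.le_arrivalTime {G : SimpleGraph V} {s g : V} {p : ℕ → V}
    (hp : FeasiblePath G s g p) {φ : V → ℕ} (hφ : ∀ x y, G.Adj x y → φ x ≤ φ y + 1) :
    φ s ≤ φ g + arrivalTime g p := by
  simpa [hp.1, hp.2.2.1 _ le_rfl] using le_add_of_forall_adj_le hφ hp.2.2.2 0 (arrivalTime g p)

theorem reachable_of_forall_exists_adj_lt {G : SimpleGraph V} {φ : V → ℕ} {c : V}
    (h : ∀ v, v ≠ c → ∃ w, G.Adj v w ∧ φ w < φ v) (v : V) : G.Reachable v c := by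
  induction hv : φ v using Nat.strong_induction_on generalizing v with
  | _ n ih =>
    by_cases hvc : v = c
    · exact hvc ▸ .refl _
    obtain ⟨w, hvw, hw⟩ := h v hvc
    exact hvw.reachable.trans (ih _ (hv ▸ hw) w rfl)

theorem connected_of_forall_exists_adj_lt {G : SimpleGraph V} {φ : V → ℕ} {c : V}
    (h : ∀ v, v ≠ c → ∃ w, G.Adj v w ∧ φ w < φ v) : G.Connected :=
  (G.connected_iff_exists_forall_reachable).2
    ⟨c, fun v => (reachable_of_forall_exists_adj_lt h v).symm⟩

theorem not_collide_of_forall_ne {p q : ℕ → V} (h : ∀ t, p t ≠ q t ∧ p t ≠ q (t + 1)) :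
    ¬Collide p q ∧ ¬Collide q p := by
  constructor
  · rintro (⟨t, ht⟩ | ⟨t, ht, -, -⟩)
    exacts [(h t).1 ht, (h t).2 ht]
  · rintro (⟨t, ht⟩ | ⟨t, -, ht, -⟩)
    exacts [(h t).1 ht.symm, (h t).2 ht.symm]

theorem isSolution_pair {G : SimpleGraph V} {xI xG : Fin 2 → V} {p q : ℕ → V}
    (hp : FeasiblePath G (xI 0) (xG 0) p) (hq : FeasiblePath G (xI 1) (xG 1) q)
    (hpq : ∀ t, p t ≠ q t ∧ p t ≠ q (t + 1)) : IsSolution G xI xG ![p, q] := by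
  refine ⟨Fin.forall_fin_two.2 ⟨hp, hq⟩, fun i j hij => ?_⟩
  fin_cases i <;> fin_cases j
  exacts [absurd rfl hij, (not_collide_of_forall_ne hpq).1, (not_collide_of_forall_ne hpq).2,
    absurd rfl hij]

def schedule (w : List V) (g : V) : ℕ → V := fun t => w.getD t g

theorem schedule_of_length_le {w : List V} {g : V} {t : ℕ} (h : w.length ≤ t) :
    schedule w g t = g :=
  List.getD_eq_default _ _ h

theorem schedule_eq_getD_append (w : List V) (g : V) (t : ℕ) :
    schedule w g t = (w ++ [g]).getD t g := by
  rcases lt_or_ge t w.length with h | h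
  · exact (List.getD_append _ _ _ _ h).symm
  · rw [List.getD_append_right _ _ _ _ h, schedule_of_length_le h]
    cases t - w.length <;> rfl

theorem arrivalTime_schedule {w : List V} {g : V} (hg : g ∉ w) :
    arrivalTime g (schedule w g) = w.length :=
  arrivalTime_eq (schedule_of_length_le le_rfl) fun s hs h =>
    hg (by rw [← h, schedule, List.getD_eq_getElem w g hs]; exact List.getElem_mem hs)

theorem feasiblePath_schedule {G : SimpleGraph V} {w : List V} {g : V} (hg : g ∉ w)
    (hw : (w ++ [g]).IsChain fun a b => G.Adj a b ∨ a = b) :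
    FeasiblePath G (w.headD g) g (schedule w g) := by
  refine ⟨by cases w <;> rfl, ⟨_, schedule_of_length_le le_rfl⟩,
    fun t ht => schedule_of_length_le (arrivalTime_schedule hg ▸ ht), fun t => ?_⟩
  rcases lt_or_ge t w.length with ht | ht
  · have hlen : t + 1 < (w ++ [g]).length := by simpa using ht
    rw [schedule_eq_getD_append, schedule_eq_getD_append, List.getD_eq_getElem _ _ hlen,
      List.getD_eq_getElem _ _ (by omega)]
    exact List.isChain_iff_getElem.1 hw t hlen
  · rw [schedule_of_length_le ht, schedule_of_length_le (by omega)]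
    exact .inr rfl

theorem schedule_ne_schedule {w w' : List V} {g g' : V} (hg : g ≠ g')
    (h : ∀ t < max w.length w'.length,
      schedule w g t ≠ schedule w' g' t ∧ schedule w g t ≠ schedule w' g' (t + 1)) (t : ℕ) :
    schedule w g t ≠ schedule w' g' t ∧ schedule w g t ≠ schedule w' g' (t + 1) := by
  rcases lt_or_ge t (max w.length w'.length) with ht | ht
  · exact h t ht
  · rw [schedule_of_length_le (le_of_max_le_left ht), schedule_of_length_le (le_of_max_le_right ht),
      schedule_of_length_le (by omega)]
    exact ⟨hg, hg⟩

variable {R : Type} [Fintype R] {G : SimpleGraph V} {xI xG : R → V} {p : R → ℕ → V}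

theorem minTotalTime_le (hp : IsSolution G xI xG p) : minTotalTime G xI xG ≤ totalTime xG p :=
  Nat.sInf_le ⟨p, hp, rfl⟩

theorem minMakespan_le (hp : IsSolution G xI xG p) : minMakespan G xI xG ≤ makespan xG p :=
  Nat.sInf_le ⟨p, hp, rfl⟩

theorem arrivalTime_le_makespan (i : R) : arrivalTime (xG i) (p i) ≤ makespan xG p :=
  Finset.le_sup (f := fun i => arrivalTime (xG i) (p i)) (Finset.mem_univ i)

end General

section Detour

def detourEdges : List (Fin 8 × Fin 8) :=
  [(0, 3), (1, 2), (2, 3), (3, 4), (4, 5), (2, 6), (6, 7), (7, 4)]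

def detourGraph : SimpleGraph (Fin 8) := .fromRel fun x y => (x, y) ∈ detourEdges

instance : DecidableRel detourGraph.Adj :=
  inferInstanceAs (DecidableRel (SimpleGraph.fromRel _).Adj)

def detourStart : Fin 2 → Fin 8 := ![0, 1]

def detourGoal : Fin 2 → Fin 8 := ![3, 5]

def distToFive : Fin 8 → ℕ := ![3, 4, 3, 2, 1, 0, 3, 2]

theorem distToFive_le_of_adj : ∀ x y, detourGraph.Adj x y → distToFive x ≤ distToFive y + 1 := by
  decide

theorem detourGraph_connected : detourGraph.Connected :=
  connected_of_forall_exists_adj_lt (φ := distToFive) (c := 5) (by decide)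

theorem detourInstance : IsMPPInstance detourGraph detourStart detourGoal :=
  ⟨detourGraph_connected, by decide, by decide⟩

def detourTimeOptimal : Fin 2 → ℕ → Fin 8 :=
  ![schedule [0] 3, schedule [1, 2, 6, 7, 4] 5]

def detourMakespanOptimal : Fin 2 → ℕ → Fin 8 :=
  ![schedule [0, 0, 0] 3, schedule [1, 2, 3, 4] 5]

theorem detourTimeOptimal_isSolution :
    IsSolution detourGraph detourStart detourGoal detourTimeOptimal :=
  isSolution_pair (feasiblePath_schedule (by decide) (by decide))
    (feasiblePath_schedule (by decide) (by decide)) (schedule_ne_schedule (by decide) (by decide))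

theorem detourMakespanOptimal_isSolution :
    IsSolution detourGraph detourStart detourGoal detourMakespanOptimal :=
  isSolution_pair (feasiblePath_schedule (by decide) (by decide))
    (feasiblePath_schedule (by decide) (by decide)) (schedule_ne_schedule (by decide) (by decide))

theorem totalTime_detourTimeOptimal : totalTime detourGoal detourTimeOptimal = 6 := by
  rw [totalTime, Fin.sum_univ_two]
  exact congrArg₂ (· + ·) (arrivalTime_schedule (by decide)) (arrivalTime_schedule (by decide))

theorem makespan_detourMakespanOptimal : makespan detourGoal detourMakespanOptimal ≤ 4 :=
  Finset.sup_le fun i _ => by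
    fin_cases i
    exacts [(arrivalTime_schedule (by decide)).trans_le (by decide),
      (arrivalTime_schedule (by decide)).le]

/-- Since `distToFive` drops by at most one per step, a route from 1 to 5 in four steps is a
shortest path, and the only one is 1–2–3–4–5. -/
theorem detour_passes_three {p : ℕ → Fin 8}
    (hp : ∀ t, detourGraph.Adj (p t) (p (t + 1)) ∨ p t = p (t + 1)) (h0 : p 0 = 1)
    (h4 : p 4 = 5) : p 2 = 3 := by
  have hφ := le_add_of_forall_adj_le distToFive_le_of_adj hp
  have h1 : p 1 = 2 := by
    have : ∀ v, (detourGraph.Adj 1 v ∨ 1 = v) → distToFive v ≤ 3 → v = 2 := by decide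
    exact this _ (h0 ▸ hp 0) (by simpa [h4, distToFive] using hφ 1 3)
  have : ∀ v, (detourGraph.Adj 2 v ∨ 2 = v) → distToFive v ≤ 2 → v = 3 := by decide
  exact this _ (h1 ▸ hp 1) (by simpa [h4, distToFive] using hφ 2 2)

theorem seven_le_totalTime_of_makespan_le {p : Fin 2 → ℕ → Fin 8}
    (hp : IsSolution detourGraph detourStart detourGoal p) (hmk : makespan detourGoal p ≤ 4) :
    7 ≤ totalTime detourGoal p := by
  obtain ⟨hfeas, hcoll⟩ := hp
  have h14 : p 1 4 = 5 := (hfeas 1).2.2.1 4 ((arrivalTime_le_makespan 1).trans hmk)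
  have h12 : p 1 2 = 3 := detour_passes_three (hfeas 1).2.2.2 (hfeas 1).1 h14
  have h0 : 3 ≤ arrivalTime (detourGoal 0) (p 0) := by
    by_contra! h
    exact hcoll zero_ne_one (.inl ⟨2, by rw [(hfeas 0).2.2.1 2 (by omega), h12]; rfl⟩)
  have h1 : 4 ≤ arrivalTime (detourGoal 1) (p 1) := by
    simpa [detourStart, detourGoal, distToFive] using (hfeas 1).le_arrivalTime distToFive_le_of_adj
  rw [totalTime, Fin.sum_univ_two]
  omega

end Detour

/-- There exists a solvable MPP instance such that every solution attaining
the minimum makespan has total arrival time strictly greater than the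
minimum total arrival time. -/
theorem pareto_totalTime_makespan :
    ∃ (k : ℕ) (V : Type) (G : SimpleGraph V) (xI xG : Fin k → V),
      IsMPPInstance G xI xG ∧ (∃ p, IsSolution G xI xG p) ∧
      ∀ p, IsSolution G xI xG p → makespan xG p = minMakespan G xI xG →
        minTotalTime G xI xG < totalTime xG p := by
  refine ⟨2, Fin 8, detourGraph, detourStart, detourGoal, detourInstance,
    ⟨_, detourTimeOptimal_isSolution⟩, fun p hp hmk => ?_⟩
  have hmk4 : makespan detourGoal p ≤ 4 :=
    hmk ▸ (minMakespan_le detourMakespanOptimal_isSolution).trans makespan_detourMakespanOptimal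
  calc minTotalTime detourGraph detourStart detourGoal
      ≤ totalTime detourGoal detourTimeOptimal := minTotalTime_le detourTimeOptimal_isSolution
    _ = 6 := totalTime_detourTimeOptimal
    _ < 7 := by norm_num
    _ ≤ totalTime detourGoal p := seven_le_totalTime_of_makespan_le hp hmk4

end MPPFormal
end

section
/- For every pair of distinct objectives among the four objectives {total arrival time, makespan, total distance, maximum distance}, there exists a solvable MPP instance for which no single solution simultaneously attains the minimum value of both objectives of the pair over all solutions. -/
namespace MPPFormal

/-- The four objectives, indexed by `Fin 4`: total arrival time, makespan,
total distance, and maximum distance. -/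
noncomputable def objective {V R : Type} [Fintype R] (a : Fin 4)
    (xG : R → V) (p : R → ℕ → V) : ℕ :=
  if a = 0 then totalTime xG p
  else if a = 1 then makespan xG p
  else if a = 2 then totalDist p
  else maxDist p

/-- The minimum of the `a`-th objective over all solutions. -/
noncomputable def minObjective {V R : Type} [Fintype R] (a : Fin 4)
    (G : SimpleGraph V) (xI xG : R → V) : ℕ :=
  sInf {c | ∃ p, IsSolution G xI xG p ∧ objective a xG p = c}

/-
Both instances have two robots. A schedule that moves along edges or waits traces a walk with
one edge per move, so path lengths are bounded below by graph distances, and arrival times by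
path lengths. Each instance adds one or two constraints coming from the interaction of the
robots, and two explicit solutions attain the minimum of every objective; every minimum and every
conflict then follows from these constraints by linear arithmetic.

Instance A: robot 0 goes `a → b` and robot 1 goes `x → y`, whose only route of length 3 is
`x a b y`; its detour `x u v w y` has length 4. Either robot 1 detours, which is best for total
arrival time and total distance, or robot 0 steps aside along `a c a b` while robot 1 passes,
which is best for makespan and maximum distance.

Instance B: robot 0 goes `x → y` and robot 1 goes `s → g`, crossing the corridor `m₁ m₂` in
opposite directions; robot 1 may instead detour through `a b c` at the cost of one move. Robot 1
either detours, which is best for total arrival time and makespan, or waits two steps for robot 0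
to clear the corridor, which is best for total distance and maximum distance.
-/

open Finset

variable {V : Type}

abbrev AdjOrEq (G : SimpleGraph V) (u v : V) : Prop := G.Adj u v ∨ u = v

theorem _root_.SimpleGraph.Walk.exists_support_eq_of_length_eq_two {G : SimpleGraph V} :
    ∀ {u v : V} (w : G.Walk u v), w.length = 2 →
      ∃ m, G.Adj u m ∧ G.Adj m v ∧ w.support = [u, m, v]
  | _, _, .cons h (.cons h' .nil), _ => ⟨_, h, h', rfl⟩
  | _, _, .nil, h => by simp at h
  | _, _, .cons _ .nil, h => by simp at h
  | _, _, .cons _ (.cons _ (.cons _ _)), h => by simp at h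

theorem _root_.SimpleGraph.Walk.three_le_length {G : SimpleGraph V} {u v : V} (w : G.Walk u v)
    (hne : u ≠ v) (hadj : ¬ G.Adj u v) (hm : ∀ m, G.Adj u m → ¬ G.Adj m v) : 3 ≤ w.length := by
  by_contra! h
  interval_cases hl : w.length
  · exact hne (w.eq_of_length_eq_zero hl)
  · exact hadj (w.adj_of_length_eq_one hl)
  · obtain ⟨m, hum, hmv, -⟩ := w.exists_support_eq_of_length_eq_two hl
    exact hm m hum hmv

section Moves

variable [DecidableEq V] {G : SimpleGraph V} {p : ℕ → V} {l m n : ℕ}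

def movesIn (p : ℕ → V) (m n : ℕ) : Finset ℕ := {t ∈ Ico m n | p t ≠ p (t + 1)}

lemma card_movesIn_add (hlm : l ≤ m) (hmn : m ≤ n) :
    #(movesIn p l m) + #(movesIn p m n) = #(movesIn p l n) := by
  rw [movesIn, movesIn, movesIn, ← Ico_union_Ico_eq_Ico hlm hmn, filter_union,
    card_union_of_disjoint (disjoint_filter_filter (Ico_disjoint_Ico_consecutive l m n))]

lemma card_movesIn_succ (hmn : m ≤ n) :
    #(movesIn p m (n + 1)) = #(movesIn p m n) + if p n = p (n + 1) then 0 else 1 := by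
  rw [← card_movesIn_add hmn n.le_succ]
  congr
  split_ifs with h <;> simp [movesIn, h, filter_singleton]

theorem exists_walk_of_adjOrEq (hstep : ∀ t, AdjOrEq G (p t) (p (t + 1))) (hmn : m ≤ n) :
    ∃ w : G.Walk (p m) (p n), w.length = #(movesIn p m n) ∧ ∀ v ∈ w.support, ∃ t ≤ n, p t = v := by
  induction n, hmn using Nat.le_induction with
  | base => exact ⟨.nil, by simp [movesIn], fun v hv => ⟨m, le_rfl, by simp_all⟩⟩
  | succ n hmn ih =>
    obtain ⟨w, hlen, hvisit⟩ := ih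
    rw [card_movesIn_succ hmn]
    by_cases hwait : p n = p (n + 1)
    · refine ⟨w.copy rfl hwait, by simp [hlen, hwait], fun v hv => ?_⟩
      obtain ⟨t, ht, rfl⟩ := hvisit v (by simpa using hv)
      exact ⟨t, by omega, rfl⟩
    · refine ⟨w.concat ((hstep n).resolve_right hwait), by simp [hlen, hwait], fun v hv => ?_⟩
      simp only [SimpleGraph.Walk.support_concat, List.mem_append, List.mem_singleton] at hv
      rcases hv with hv | rfl
      · obtain ⟨t, ht, rfl⟩ := hvisit v hv
        exact ⟨t, by omega, rfl⟩
      · exact ⟨n + 1, le_rfl, rfl⟩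

end Moves

lemma ne_of_lt_arrivalTime {g : V} {p : ℕ → V} {t : ℕ} (h : t < arrivalTime g p) : p t ≠ g :=
  Nat.notMem_of_lt_sInf h

namespace FeasiblePath

variable {G : SimpleGraph V} {s g : V} {p : ℕ → V} (hp : FeasiblePath G s g p)
include hp

lemma adjOrEq (t : ℕ) : AdjOrEq G (p t) (p (t + 1)) := hp.2.2.2 t

lemma apply_arrivalTime : p (arrivalTime g p) = g := Nat.sInf_mem hp.2.1

lemma eq_of_arrivalTime_le {t : ℕ} (h : arrivalTime g p ≤ t) : p t = g := hp.2.2.1 t h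

lemma lt_arrivalTime_of_ne {t : ℕ} (h : p t ≠ p (t + 1)) : t < arrivalTime g p := by
  by_contra! hle
  exact h ((hp.eq_of_arrivalTime_le hle).trans (hp.eq_of_arrivalTime_le (by omega)).symm)

lemma arrivalTime_pos (hsg : s ≠ g) : 0 < arrivalTime g p :=
  Nat.pos_of_ne_zero fun h => hsg (hp.1.symm.trans (h ▸ hp.apply_arrivalTime))

lemma adj_apply_pred_arrivalTime (hsg : s ≠ g) : G.Adj (p (arrivalTime g p - 1)) g := by
  obtain ⟨k, hk⟩ := Nat.exists_eq_add_one.2 (hp.arrivalTime_pos hsg)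
  have hstep := hp.adjOrEq k
  rw [← hk, hp.apply_arrivalTime] at hstep
  rw [hk, Nat.add_sub_cancel]
  exact hstep.resolve_right (ne_of_lt_arrivalTime (by omega))

variable [DecidableEq V]

lemma pathLen_eq : pathLen p = #(movesIn p 0 (arrivalTime g p)) := by
  rw [pathLen, ← Set.ncard_coe_finset]
  congr
  ext t
  simpa [movesIn] using hp.lt_arrivalTime_of_ne

lemma card_movesIn_le_pathLen (m n : ℕ) : #(movesIn p m n) ≤ pathLen p := by
  rw [hp.pathLen_eq]
  refine card_le_card fun t ht => ?_
  simp only [movesIn, mem_filter, mem_Ico] at ht ⊢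
  exact ⟨⟨Nat.zero_le t, hp.lt_arrivalTime_of_ne ht.2⟩, ht.2⟩

lemma pathLen_le_arrivalTime : pathLen p ≤ arrivalTime g p := by
  rw [hp.pathLen_eq]
  exact (card_filter_le _ _).trans (by simp)

lemma exists_walk : ∃ w : G.Walk s g, w.length = pathLen p := by
  obtain ⟨w, hw, -⟩ := exists_walk_of_adjOrEq hp.adjOrEq (Nat.zero_le (arrivalTime g p))
  exact ⟨w.copy hp.1 hp.apply_arrivalTime, by simp [hw, hp.pathLen_eq]⟩

lemma eq_of_card_movesIn_eq_zero {n : ℕ} (h : #(movesIn p 0 n) = 0) : p n = s := by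
  obtain ⟨w, hw, -⟩ := exists_walk_of_adjOrEq hp.adjOrEq (Nat.zero_le n)
  exact hp.1 ▸ (w.eq_of_length_eq_zero (hw.trans h)).symm

lemma eq_of_pathLen_le {n : ℕ} (h : pathLen p ≤ #(movesIn p 0 n)) : p n = g := by
  rcases le_total (arrivalTime g p) n with hA | hA
  · exact hp.eq_of_arrivalTime_le hA
  obtain ⟨w, hw, -⟩ := exists_walk_of_adjOrEq hp.adjOrEq hA
  have := card_movesIn_add (p := p) (Nat.zero_le n) hA
  rw [← hp.pathLen_eq] at this
  exact hp.apply_arrivalTime ▸ w.eq_of_length_eq_zero (by omega)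

lemma exists_wait_of_pathLen_lt {n : ℕ} (h : pathLen p < n) : ∃ t < n, p t = p (t + 1) := by
  by_contra! hmove
  have : movesIn p 0 n = range n := by
    ext t
    simpa [movesIn] using fun ht => hmove t ht
  have hcard := hp.card_movesIn_le_pathLen 0 n
  rw [this, card_range] at hcard
  omega

lemma card_movesIn_pred_arrivalTime (hsg : s ≠ g) :
    #(movesIn p 0 (arrivalTime g p - 1)) + 1 = pathLen p := by
  obtain ⟨k, hk⟩ := Nat.exists_eq_add_one.2 (hp.arrivalTime_pos hsg)
  have hmove : p k ≠ p (k + 1) := by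
    rw [← hk, hp.apply_arrivalTime]
    exact ne_of_lt_arrivalTime (by omega)
  rw [hp.pathLen_eq, hk, Nat.add_sub_cancel, card_movesIn_succ (Nat.zero_le k), if_neg hmove]

end FeasiblePath

lemma collide_comm {p q : ℕ → V} : Collide p q ↔ Collide q p := by
  constructor <;>
  · rintro (⟨t, ht⟩ | ⟨t, h₁, h₂, hne⟩)
    · exact Or.inl ⟨t, ht.symm⟩
    · exact Or.inr ⟨t, h₂.symm, h₁.symm, fun h => hne (h₁.trans (h.symm.trans h₂.symm))⟩

section TwoRobots

variable {G : SimpleGraph V} {xI xG : Fin 2 → V} {p : Fin 2 → ℕ → V}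

lemma isSolution_fin_two :
    IsSolution G xI xG p ↔ FeasiblePath G (xI 0) (xG 0) (p 0) ∧
      FeasiblePath G (xI 1) (xG 1) (p 1) ∧ ¬ Collide (p 0) (p 1) := by
  refine ⟨fun h => ⟨h.1 0, h.1 1, h.2 zero_ne_one⟩,
    fun ⟨h₀, h₁, h⟩ => ⟨Fin.forall_fin_two.2 ⟨h₀, h₁⟩, ?_⟩⟩
  intro i j hij
  fin_cases i <;> fin_cases j
  exacts [absurd rfl hij, h, collide_comm.not.1 h, absurd rfl hij]

lemma objective_fin_two (a : Fin 4) (xG : Fin 2 → V) (p : Fin 2 → ℕ → V) :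
    objective a xG p =
      ![arrivalTime (xG 0) (p 0) + arrivalTime (xG 1) (p 1),
        max (arrivalTime (xG 0) (p 0)) (arrivalTime (xG 1) (p 1)),
        pathLen (p 0) + pathLen (p 1), max (pathLen (p 0)) (pathLen (p 1))] a := by
  have huniv : (univ : Finset (Fin 2)) = {0, 1} := rfl
  fin_cases a <;>
    simp [objective, totalTime, makespan, totalDist, maxDist, huniv]

end TwoRobots

def ParetoConflict {R : Type} [Fintype R] (G : SimpleGraph V) (xI xG : R → V) (a b : Fin 4) :
    Prop :=
  ¬ ∃ p, IsSolution G xI xG p ∧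
    objective a xG p = minObjective a G xI xG ∧ objective b xG p = minObjective b G xI xG

lemma ParetoConflict.symm {R : Type} [Fintype R] {G : SimpleGraph V} {xI xG : R → V}
    {a b : Fin 4} (h : ParetoConflict G xI xG a b) : ParetoConflict G xI xG b a :=
  fun ⟨p, hp, hb, ha⟩ => h ⟨p, hp, ha, hb⟩

section ListPath

def listPath (l : List V) (g : V) (t : ℕ) : V := l.getD t g

variable {G : SimpleGraph V} {l : List V} {s g : V}

lemma listPath_of_length_le {t : ℕ} (h : l.length ≤ t) : listPath l g t = g :=
  List.getD_eq_default _ _ h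

lemma arrivalTime_listPath (hg : g ∉ l) : arrivalTime g (listPath l g) = l.length := by
  refine le_antisymm (Nat.sInf_le (listPath_of_length_le le_rfl))
    (le_csInf ⟨_, listPath_of_length_le le_rfl⟩ ?_)
  intro t (ht : l.getD t g = g)
  by_contra! hlt
  rw [List.getD_eq_getElem _ _ hlt] at ht
  exact hg (ht ▸ List.getElem_mem hlt)

lemma feasiblePath_listPath (h₀ : listPath l g 0 = s) (hg : g ∉ l)
    (hstep : ∀ t < l.length, AdjOrEq G (listPath l g t) (listPath l g (t + 1))) :
    FeasiblePath G s g (listPath l g) := by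
  refine ⟨h₀, ⟨_, listPath_of_length_le le_rfl⟩, fun t ht => ?_, fun t => ?_⟩
  · exact listPath_of_length_le (arrivalTime_listPath hg ▸ ht)
  · by_cases ht : t < l.length
    · exact hstep t ht
    · exact Or.inr
        ((listPath_of_length_le (by omega)).trans (listPath_of_length_le (by omega)).symm)

lemma pathLen_listPath [DecidableEq V] :
    pathLen (listPath l g) = #(movesIn (listPath l g) 0 l.length) := by
  rw [pathLen, ← Set.ncard_coe_finset]
  congr
  ext t
  have hlt : listPath l g t ≠ listPath l g (t + 1) → t < l.length := fun h => by
    by_contra! ht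
    exact h ((listPath_of_length_le ht).trans (listPath_of_length_le (by omega)).symm)
  simpa [movesIn] using hlt

lemma not_collide_listPath {l' : List V} {g' : V} (N : ℕ) (hl : l.length ≤ N) (hl' : l'.length ≤ N)
    (hmeet : ∀ t ≤ N, listPath l g t ≠ listPath l' g' t)
    (hswap : ∀ t < N, ¬ (listPath l g t = listPath l' g' (t + 1) ∧
      listPath l g (t + 1) = listPath l' g' t)) :
    ¬ Collide (listPath l g) (listPath l' g') := by
  rintro (⟨t, ht⟩ | ⟨t, h₁, h₂, hne⟩)
  · rcases le_total t N with htN | hNt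
    · exact hmeet t htN ht
    · rw [listPath_of_length_le (hl.trans hNt), listPath_of_length_le (hl'.trans hNt)] at ht
      exact hmeet N le_rfl (by rwa [listPath_of_length_le hl, listPath_of_length_le hl'])
  · rcases lt_or_ge t N with htN | hNt
    · exact hswap t htN ⟨h₁, h₂⟩
    · exact hne ((listPath_of_length_le (hl.trans hNt)).trans
        (listPath_of_length_le (by omega)).symm)

end ListPath

namespace InstanceA

-- x = 0, a = 1, b = 2, y = 3, c = 4, u = 5, v = 6, w = 7
def G : SimpleGraph (Fin 8) := SimpleGraph.fromRel fun u v =>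
  (u, v) ∈ [(0, 1), (1, 2), (2, 3), (1, 4), (0, 5), (5, 6), (6, 7), (7, 3)]

instance : DecidableRel G.Adj := inferInstanceAs (DecidableRel (SimpleGraph.fromRel _).Adj)

def xI : Fin 2 → Fin 8 := ![1, 0]

def xG : Fin 2 → Fin 8 := ![2, 3]

lemma isMPPInstance : IsMPPInstance G xI xG := ⟨by decide, by decide, by decide⟩

section Solutions

variable {p : Fin 2 → ℕ → Fin 8} (hp : IsSolution G xI xG p)
include hp

lemma solution_bounds :
    1 ≤ pathLen (p 0) ∧ pathLen (p 0) ≤ arrivalTime 2 (p 0) ∧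
      3 ≤ pathLen (p 1) ∧ pathLen (p 1) ≤ arrivalTime 3 (p 1) := by
  have hf₀ : FeasiblePath G 1 2 (p 0) := hp.1 0
  have hf₁ : FeasiblePath G 0 3 (p 1) := hp.1 1
  obtain ⟨w₀, hw₀⟩ := hf₀.exists_walk
  obtain ⟨w₁, hw₁⟩ := hf₁.exists_walk
  refine ⟨?_, hf₀.pathLen_le_arrivalTime, ?_, hf₁.pathLen_le_arrivalTime⟩
  · exact hw₀ ▸ Nat.pos_of_ne_zero fun h => absurd (w₀.eq_of_length_eq_zero h) (by decide)
  · exact hw₁ ▸ w₁.three_le_length (by decide) (by decide) (by decide)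

lemma pathLen_zero_ne_two : pathLen (p 0) ≠ 2 := by
  obtain ⟨w, hw⟩ := (hp.1 0 : FeasiblePath G 1 2 (p 0)).exists_walk
  intro h
  obtain ⟨m, h₁, h₂, -⟩ := w.exists_support_eq_of_length_eq_two (hw.trans h)
  exact (by decide : ∀ m, G.Adj 1 m → ¬ G.Adj m 2) m h₁ h₂

/-- Robot 1 can reach `y` by time 3 only along `x a b y`, meeting robot 0 at `b` if that one
has arrived by time 2. -/
lemma not_early_arrivals : ¬ (arrivalTime 2 (p 0) ≤ 2 ∧ arrivalTime 3 (p 1) ≤ 3) := by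
  rintro ⟨h₀, h₁⟩
  have hf₀ : FeasiblePath G 1 2 (p 0) := hp.1 0
  have hf₁ : FeasiblePath G 0 3 (p 1) := hp.1 1
  have hroute : ∀ s₁, AdjOrEq G 0 s₁ → ∀ s₂, AdjOrEq G s₁ s₂ → AdjOrEq G s₂ 3 → s₂ = 2 := by
    decide
  have hb : p 1 2 = 2 := hroute _ (hf₁.1 ▸ hf₁.adjOrEq 0) _ (hf₁.adjOrEq 1)
    (hf₁.eq_of_arrivalTime_le h₁ ▸ hf₁.adjOrEq 2)
  exact hp.2 zero_ne_one (Or.inl ⟨2, (hf₀.eq_of_arrivalTime_le h₀).trans hb.symm⟩)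

/-- With three moves, robot 1 follows `x a b y` and stands on `b` just before arriving; robot 0,
with a single move, is then either still on `a` when robot 1 passes it or already on `b`. -/
lemma not_shortest_paths : ¬ (pathLen (p 0) = 1 ∧ pathLen (p 1) = 3) := by
  rintro ⟨h₀, h₁⟩
  have hf₀ : FeasiblePath G 1 2 (p 0) := hp.1 0
  have hf₁ : FeasiblePath G 0 3 (p 1) := hp.1 1
  have hcol : ¬ Collide (p 0) (p 1) := hp.2 zero_ne_one
  have hT := hf₁.card_movesIn_pred_arrivalTime (by decide)
  set T := arrivalTime 3 (p 1) - 1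
  obtain ⟨w, hw, hvisit⟩ := exists_walk_of_adjOrEq hf₁.adjOrEq (Nat.zero_le T)
  obtain ⟨m, hxm, hmT, hsupp⟩ := w.exists_support_eq_of_length_eq_two (by omega)
  have hroute : ∀ m z, G.Adj 0 m → G.Adj m z → G.Adj z 3 → m = 1 ∧ z = 2 := by decide
  obtain ⟨rfl, hb⟩ := hroute m _ (hf₁.1 ▸ hxm) hmT (hf₁.adj_apply_pred_arrivalTime (by decide))
  obtain ⟨t, htT, ha⟩ := hvisit 1 (by simp [hsupp])
  by_cases hstill : p 0 t = 1
  · exact hcol (Or.inl ⟨t, hstill.trans ha.symm⟩)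
  have hmoved : #(movesIn (p 0) 0 t) ≠ 0 := fun h => hstill (hf₀.eq_of_card_movesIn_eq_zero h)
  have := card_movesIn_add (p := p 0) (Nat.zero_le t) htT
  exact hcol (Or.inl ⟨T, (hf₀.eq_of_pathLen_le (by omega)).trans hb.symm⟩)

end Solutions

def solA : Fin 2 → ℕ → Fin 8 := ![listPath [1] 2, listPath [0, 5, 6, 7] 3]

def solB : Fin 2 → ℕ → Fin 8 := ![listPath [1, 4, 1] 2, listPath [0, 1, 2] 3]

lemma isSolution_solA : IsSolution G xI xG solA :=
  isSolution_fin_two.2 ⟨feasiblePath_listPath rfl (by decide) (by decide),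
    feasiblePath_listPath rfl (by decide) (by decide),
    not_collide_listPath 4 (by decide) (by decide) (by decide) (by decide)⟩

lemma isSolution_solB : IsSolution G xI xG solB :=
  isSolution_fin_two.2 ⟨feasiblePath_listPath rfl (by decide) (by decide),
    feasiblePath_listPath rfl (by decide) (by decide),
    not_collide_listPath 3 (by decide) (by decide) (by decide) (by decide)⟩

lemma objective_solA (a : Fin 4) : objective a xG solA = ![5, 4, 5, 4] a := by
  have h₀ : arrivalTime (xG 0) (solA 0) = 1 := arrivalTime_listPath (by decide)
  have h₁ : arrivalTime (xG 1) (solA 1) = 4 := arrivalTime_listPath (by decide)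
  have l₀ : pathLen (solA 0) = 1 := pathLen_listPath.trans (by decide)
  have l₁ : pathLen (solA 1) = 4 := pathLen_listPath.trans (by decide)
  rw [objective_fin_two, h₀, h₁, l₀, l₁]
  fin_cases a <;> rfl

lemma objective_solB (a : Fin 4) : objective a xG solB = ![6, 3, 6, 3] a := by
  have h₀ : arrivalTime (xG 0) (solB 0) = 3 := arrivalTime_listPath (by decide)
  have h₁ : arrivalTime (xG 1) (solB 1) = 3 := arrivalTime_listPath (by decide)
  have l₀ : pathLen (solB 0) = 3 := pathLen_listPath.trans (by decide)
  have l₁ : pathLen (solB 1) = 3 := pathLen_listPath.trans (by decide)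
  rw [objective_fin_two, h₀, h₁, l₀, l₁]
  fin_cases a <;> rfl

lemma minObjective_eq (a : Fin 4) : minObjective a G xI xG = ![5, 3, 5, 3] a := by
  refine IsLeast.csInf_eq ⟨?_, ?_⟩
  · fin_cases a
    exacts [⟨solA, isSolution_solA, objective_solA 0⟩, ⟨solB, isSolution_solB, objective_solB 1⟩,
      ⟨solA, isSolution_solA, objective_solA 2⟩, ⟨solB, isSolution_solB, objective_solB 3⟩]
  · rintro _ ⟨p, hp, rfl⟩
    have := solution_bounds hp
    have := not_early_arrivals hp
    have := not_shortest_paths hp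
    fin_cases a <;> simp [objective_fin_two, xG] <;> omega

lemma paretoConflict {a b : Fin 4} (hab : (a, b) ∈ [(0, 1), (0, 3), (1, 2), (2, 3)]) :
    ParetoConflict G xI xG a b := by
  rintro ⟨p, hp, ha, hb⟩
  have := solution_bounds hp
  have := pathLen_zero_ne_two hp
  have := not_early_arrivals hp
  have := not_shortest_paths hp
  rw [objective_fin_two, minObjective_eq] at ha hb
  fin_cases a <;> fin_cases b <;> simp [xG] at hab ha hb <;> omega

end InstanceA

namespace InstanceB

-- s = 0, m₁ = 1, m₂ = 2, g = 3, x = 4, y = 5, a = 6, b = 7, c = 8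
def G : SimpleGraph (Fin 9) := SimpleGraph.fromRel fun u v =>
  (u, v) ∈ [(0, 1), (1, 2), (2, 3), (4, 2), (1, 5), (0, 6), (6, 7), (7, 8), (8, 3)]

instance : DecidableRel G.Adj := inferInstanceAs (DecidableRel (SimpleGraph.fromRel _).Adj)

def xI : Fin 2 → Fin 9 := ![4, 0]

def xG : Fin 2 → Fin 9 := ![5, 3]

lemma isMPPInstance : IsMPPInstance G xI xG := ⟨by decide, by decide, by decide⟩

section Solutions

variable {p : Fin 2 → ℕ → Fin 9} (hp : IsSolution G xI xG p)
include hp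

lemma solution_bounds :
    3 ≤ pathLen (p 0) ∧ pathLen (p 0) ≤ arrivalTime 5 (p 0) ∧
      3 ≤ pathLen (p 1) ∧ pathLen (p 1) ≤ arrivalTime 3 (p 1) := by
  have hf₀ : FeasiblePath G 4 5 (p 0) := hp.1 0
  have hf₁ : FeasiblePath G 0 3 (p 1) := hp.1 1
  obtain ⟨w₀, hw₀⟩ := hf₀.exists_walk
  obtain ⟨w₁, hw₁⟩ := hf₁.exists_walk
  refine ⟨?_, hf₀.pathLen_le_arrivalTime, ?_, hf₁.pathLen_le_arrivalTime⟩
  · exact hw₀ ▸ w₀.three_le_length (by decide) (by decide) (by decide)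
  · exact hw₁ ▸ w₁.three_le_length (by decide) (by decide) (by decide)

set_option synthInstance.maxSize 512 in
/-- Within four steps, robot 1 can only avoid the corridor `m₁ m₂` through the detour `a b c`,
which takes four moves; otherwise the two robots cross the corridor in opposite directions
during the same steps. -/
lemma not_fast_and_short :
    ¬ (arrivalTime 5 (p 0) ≤ 4 ∧ arrivalTime 3 (p 1) ≤ 4 ∧ pathLen (p 1) ≤ 3) := by
  rintro ⟨h₀, h₁, hL⟩
  have hf₀ : FeasiblePath G 4 5 (p 0) := hp.1 0
  have hf₁ : FeasiblePath G 0 3 (p 1) := hp.1 1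
  have hcol : ¬ Collide (p 0) (p 1) := hp.2 zero_ne_one
  obtain ⟨t, ht, hwait⟩ := hf₁.exists_wait_of_pathLen_lt (n := 4) (by omega)
  have hwaits : p 1 0 = p 1 1 ∨ p 1 1 = p 1 2 ∨ p 1 2 = p 1 3 ∨ p 1 3 = p 1 4 := by
    interval_cases t <;> simp [hwait]
  rw [hf₁.1, hf₁.eq_of_arrivalTime_le h₁] at hwaits
  have hcross : ∀ r₁, AdjOrEq G 4 r₁ → ∀ r₂, AdjOrEq G r₁ r₂ → ∀ r₃, AdjOrEq G r₂ r₃ →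
      AdjOrEq G r₃ 5 → ∀ s₁, AdjOrEq G 0 s₁ → ∀ s₂, AdjOrEq G s₁ s₂ → ∀ s₃, AdjOrEq G s₂ s₃ →
      AdjOrEq G s₃ 3 → (0 = s₁ ∨ s₁ = s₂ ∨ s₂ = s₃ ∨ s₃ = 3) →
      r₂ = s₂ ∨ (r₁ = s₂ ∧ r₂ = s₁ ∧ r₁ ≠ r₂) ∨ (r₂ = s₃ ∧ r₃ = s₂ ∧ r₂ ≠ r₃) := by
    decide
  rcases hcross _ (hf₀.1 ▸ hf₀.adjOrEq 0) _ (hf₀.adjOrEq 1) _ (hf₀.adjOrEq 2)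
      (hf₀.eq_of_arrivalTime_le h₀ ▸ hf₀.adjOrEq 3) _ (hf₁.1 ▸ hf₁.adjOrEq 0) _ (hf₁.adjOrEq 1)
      _ (hf₁.adjOrEq 2) (hf₁.eq_of_arrivalTime_le h₁ ▸ hf₁.adjOrEq 3) hwaits with h | h | h
  · exact hcol (Or.inl ⟨2, h⟩)
  · exact hcol (Or.inr ⟨1, h⟩)
  · exact hcol (Or.inr ⟨2, h⟩)

end Solutions

def solA : Fin 2 → ℕ → Fin 9 := ![listPath [4, 2, 1] 5, listPath [0, 0, 0, 1, 2] 3]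

def solB : Fin 2 → ℕ → Fin 9 := ![listPath [4, 2, 1] 5, listPath [0, 6, 7, 8] 3]

lemma isSolution_solA : IsSolution G xI xG solA :=
  isSolution_fin_two.2 ⟨feasiblePath_listPath rfl (by decide) (by decide),
    feasiblePath_listPath rfl (by decide) (by decide),
    not_collide_listPath 5 (by decide) (by decide) (by decide) (by decide)⟩

lemma isSolution_solB : IsSolution G xI xG solB :=
  isSolution_fin_two.2 ⟨feasiblePath_listPath rfl (by decide) (by decide),
    feasiblePath_listPath rfl (by decide) (by decide),
    not_collide_listPath 4 (by decide) (by decide) (by decide) (by decide)⟩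

lemma objective_solA (a : Fin 4) : objective a xG solA = ![8, 5, 6, 3] a := by
  have h₀ : arrivalTime (xG 0) (solA 0) = 3 := arrivalTime_listPath (by decide)
  have h₁ : arrivalTime (xG 1) (solA 1) = 5 := arrivalTime_listPath (by decide)
  have l₀ : pathLen (solA 0) = 3 := pathLen_listPath.trans (by decide)
  have l₁ : pathLen (solA 1) = 3 := pathLen_listPath.trans (by decide)
  rw [objective_fin_two, h₀, h₁, l₀, l₁]
  fin_cases a <;> rfl

lemma objective_solB (a : Fin 4) : objective a xG solB = ![7, 4, 7, 4] a := by
  have h₀ : arrivalTime (xG 0) (solB 0) = 3 := arrivalTime_listPath (by decide)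
  have h₁ : arrivalTime (xG 1) (solB 1) = 4 := arrivalTime_listPath (by decide)
  have l₀ : pathLen (solB 0) = 3 := pathLen_listPath.trans (by decide)
  have l₁ : pathLen (solB 1) = 4 := pathLen_listPath.trans (by decide)
  rw [objective_fin_two, h₀, h₁, l₀, l₁]
  fin_cases a <;> rfl

lemma minObjective_eq (a : Fin 4) : minObjective a G xI xG = ![7, 4, 6, 3] a := by
  refine IsLeast.csInf_eq ⟨?_, ?_⟩
  · fin_cases a
    exacts [⟨solB, isSolution_solB, objective_solB 0⟩, ⟨solB, isSolution_solB, objective_solB 1⟩,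
      ⟨solA, isSolution_solA, objective_solA 2⟩, ⟨solA, isSolution_solA, objective_solA 3⟩]
  · rintro _ ⟨p, hp, rfl⟩
    have := solution_bounds hp
    have := not_fast_and_short hp
    fin_cases a <;> simp [objective_fin_two, xG] <;> omega

lemma paretoConflict {a b : Fin 4} (hab : (a, b) ∈ [(0, 2), (1, 3)]) :
    ParetoConflict G xI xG a b := by
  rintro ⟨p, hp, ha, hb⟩
  have := solution_bounds hp
  have := not_fast_and_short hp
  rw [objective_fin_two, minObjective_eq] at ha hb
  fin_cases a <;> fin_cases b <;> simp [xG] at hab ha hb <;> omega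

end InstanceB

/-- For every pair of distinct objectives among the four objectives, there is
a solvable MPP instance for which no single solution simultaneously attains
the minimum value of both objectives of the pair. -/
theorem pareto_all_pairs :
    ∀ a b : Fin 4, a ≠ b →
      ∃ (k : ℕ) (V : Type) (G : SimpleGraph V) (xI xG : Fin k → V),
        IsMPPInstance G xI xG ∧ (∃ p, IsSolution G xI xG p) ∧
        ¬ ∃ p, IsSolution G xI xG p ∧
          objective a xG p = minObjective a G xI xG ∧
          objective b xG p = minObjective b G xI xG := by
  intro a b hab
  wlog hlt : a < b generalizing a b
  · obtain ⟨k, V, G, xI, xG, hI, hsol, hconf⟩ := this b a hab.symm (by omega)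
    exact ⟨k, V, G, xI, xG, hI, hsol, ParetoConflict.symm hconf⟩
  by_cases hB : (a, b) ∈ [(0, 2), (1, 3)]
  · exact ⟨2, _, _, _, _, InstanceB.isMPPInstance, ⟨_, InstanceB.isSolution_solA⟩,
      InstanceB.paretoConflict hB⟩
  · refine ⟨2, _, _, _, _, InstanceA.isMPPInstance, ⟨_, InstanceA.isSolution_solA⟩,
      InstanceA.paretoConflict ?_⟩
    fin_cases a <;> fin_cases b <;> simp_all

end MPPFormal
end

section
/- Let (G, R, x_I, x_G) be an MPP instance in which x_I is a bijection from R onto the vertex set V (every vertex is initially occupied), let P = {p_1, …, p_n} be a solution, and let t be any time step. Then the map σ_t : V → V defined by σ_t(p_i(t)) = p_i(t+1) is a well-defined permutation of V, σ_t has no orbit of size 2, and every orbit of σ_t of size at least 3 is the vertex set of a cycle in G traversed by consecutive edges of G; in other words, in a fully occupied graph each synchronous collision-free step consists of synchronized rotations of robots along vertex-disjoint cycles of G, with all non-rotating robots stationary. -/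
/-!
Every vertex is occupied at time `0`, robots never meet, and there are as many robots as
vertices, so every vertex stays occupied at every time. The step from `t` to `t + 1` is therefore
a permutation of the vertices. A robot that moves does so along an edge, and a `2`-cycle of the
permutation would be two robots swapping head-on along an edge.
-/

namespace MPPFormal

variable {V R : Type} {G : SimpleGraph V} {xI xG : R → V} {p : R → ℕ → V}

theorem exists_perm_apply_eq_of_bijective {f g : R → V} (hf : Function.Bijective f)
    (hg : Function.Bijective g) : ∃ σ : Equiv.Perm V, ∀ i, σ (f i) = g i :=
  ⟨(Equiv.ofBijective f hf).symm.trans (Equiv.ofBijective g hg), fun i => by simp⟩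

namespace IsSolution

theorem injective_config (hp : IsSolution G xI xG p) (t : ℕ) :
    Function.Injective fun i => p i t := fun i j hij => by
  by_contra hne
  exact hp.2 hne (Or.inl ⟨t, hij⟩)

theorem bijective_config [Finite R] (hp : IsSolution G xI xG p) (hI : Function.Bijective xI)
    (t : ℕ) : Function.Bijective fun i => p i t :=
  have : Finite V := Finite.of_surjective xI hI.2
  (hp.injective_config t).bijective_of_nat_card_le (Nat.card_eq_of_bijective xI hI).ge

variable {σ : V → V} {t : ℕ}

theorem adj_of_map_ne (hp : IsSolution G xI xG p) (hσ : ∀ i, σ (p i t) = p i (t + 1))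
    (hocc : Function.Surjective fun i => p i t) {v : V} (hv : σ v ≠ v) : G.Adj v (σ v) := by
  obtain ⟨i, rfl⟩ := hocc v
  rw [hσ] at hv ⊢
  exact ((hp.1 i).2.2.2 t).resolve_right hv.symm

theorem map_eq_of_map_map_eq (hp : IsSolution G xI xG p) (hσ : ∀ i, σ (p i t) = p i (t + 1))
    (hocc : Function.Surjective fun i => p i t) {v : V} (hv : σ (σ v) = v) : σ v = v := by
  by_contra hmove
  obtain ⟨i, rfl⟩ := hocc v
  obtain ⟨j, hj⟩ := hocc (p i (t + 1))
  dsimp only at hj hmove hv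
  rw [hσ] at hmove hv
  rw [← hj, hσ] at hv
  have hij : i ≠ j := by
    rintro rfl
    exact hmove hv
  exact hp.2 hij (Or.inr ⟨t, hv.symm, hj.symm, Ne.symm hmove⟩)

end IsSolution

theorem fullyOccupied_step_is_cycle_rotation_general {V R : Type} [Fintype R]
    (G : SimpleGraph V) (xI xG : R → V)
    (hI : Function.Bijective xI)
    (p : R → ℕ → V) (hp : IsSolution G xI xG p) (t : ℕ) :
    ∃ σ : Equiv.Perm V,
      (∀ i, σ (p i t) = p i (t + 1)) ∧
      (∀ v, σ (σ v) = v → σ v = v) ∧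
      ∀ v, σ v ≠ v → G.Adj v (σ v) := by
  have hocc := hp.bijective_config hI
  obtain ⟨σ, hσ⟩ := exists_perm_apply_eq_of_bijective (hocc t) (hocc (t + 1))
  exact ⟨σ, hσ, fun _ => hp.map_eq_of_map_map_eq hσ (hocc t).2,
    fun _ => hp.adj_of_map_ne hσ (hocc t).2⟩

/-- In an MPP instance whose start configuration occupies every vertex
(`xI` is a bijection onto `V`), each synchronous step of a solution is a
permutation `σ` of the vertices (robot at `p i t` moves to `σ (p i t) =
p i (t+1)`), this permutation has no orbit of size `2`, and every vertex
moved by `σ` moves along an edge of `G`; hence every orbit of size at least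
`3` is the vertex set of a cycle of `G` traversed along consecutive edges,
i.e. each step consists of synchronized rotations along vertex-disjoint
cycles of `G`, all other robots staying put. -/
theorem fullyOccupied_step_is_cycle_rotation {V R : Type} [Fintype R]
    (G : SimpleGraph V) (xI xG : R → V) (hconn : G.Connected)
    (hI : Function.Bijective xI) (hG : Function.Injective xG)
    (p : R → ℕ → V) (hp : IsSolution G xI xG p) (t : ℕ) :
    ∃ σ : Equiv.Perm V,
      (∀ i, σ (p i t) = p i (t + 1)) ∧
      (∀ v, σ (σ v) = v → σ v = v) ∧
      ∀ v, σ v ≠ v → G.Adj v (σ v) :=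
  fullyOccupied_step_is_cycle_rotation_general G xI xG hI p hp t

end MPPFormal
end
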